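/- arXiv:2309.01801 — 2 statements merged into one kernel-verified Lean document; each statement's English description precedes it below -/
import Mathlib

section
/- Suppose p(N)·N^{(h-1)/h} → 0 as N → ∞. Then |L(A)| ∼ (N·p(N))^h / θ_L, i.e., θ_L·|L(A)| / (N·p(N))^h converges to 1 in probability as N → ∞. -/
open MeasureTheory Finset Filter

namespace HM

/-- Bernoulli measure on `Bool` with success probability `p`. -/
noncomputable def bern (p : ℝ) : Measure Bool :=
  ENNReal.ofReal p • Measure.dirac true + ENNReal.ofReal (1 - p) • Measure.dirac false

instance (p : ℝ) : IsFiniteMeasure (bern p) := by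
  constructor
  rw [bern, Measure.add_apply, Measure.smul_apply, Measure.smul_apply]
  exact ENNReal.add_lt_top.2
    ⟨ENNReal.mul_lt_top ENNReal.ofReal_lt_top (measure_lt_top _ _),
     ENNReal.mul_lt_top ENNReal.ofReal_lt_top (measure_lt_top _ _)⟩

/-- The binomial random-subset model on `{0, 1, ..., N}`: each element is included
independently with probability `p`.  Sample points are functions `Fin (N+1) → Bool`. -/
noncomputable def coin (N : ℕ) (p : ℝ) : Measure (Fin (N + 1) → Bool) :=
  Measure.pi fun _ => bern p

/-- `s_L`, the sum of the positive coefficients. -/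
def sL (h : ℕ) (u : Fin h → ℤ) : ℤ := ∑ i ∈ univ.filter fun i => 0 < u i, u i

/-- `d_L`, the sum of the absolute values of the negative coefficients. -/
def dL (h : ℕ) (u : Fin h → ℤ) : ℤ := ∑ i ∈ univ.filter fun i => u i < 0, |u i|

/-- `m_L = s_L + d_L`. -/
def mL (h : ℕ) (u : Fin h → ℤ) : ℤ := sL h u + dL h u

/-- `θ_L`, the number of permutations fixing the coefficient vector. -/
noncomputable def thetaL (h : ℕ) (u : Fin h → ℤ) : ℕ :=
  Nat.card {σ : Equiv.Perm (Fin h) // ∀ i, u (σ i) = u i}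

/-- `L(A)`: the set of values `u₁a₁ + ⋯ + u_h a_h` with all `aᵢ ∈ A`,
where `A ⊆ {0,...,N}` is encoded by `ω : Fin (N+1) → Bool`. -/
def LA (h N : ℕ) (u : Fin h → ℤ) (ω : Fin (N + 1) → Bool) : Finset ℤ :=
  (univ.filter fun a : Fin h → Fin (N + 1) => ∀ i, ω (a i) = true).image
    fun a => ∑ i, u i * ((a i : ℕ) : ℤ)

/-- `L(A)^c`: the complement of `L(A)` inside `[-d_L N, s_L N]`. -/
noncomputable def LAc (h N : ℕ) (u : Fin h → ℤ) (ω : Fin (N + 1) → Bool) : Finset ℤ :=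
  Finset.Icc (-(dL h u * N)) (sL h u * N) \ LA h N u ω

/-- The density of the Irwin–Hall distribution of order `h`. -/
noncomputable def IH (h : ℕ) (x : ℝ) : ℝ :=
  if x ≤ h then
    (1 / (Nat.factorial (h - 1) : ℝ)) *
      ∑ j ∈ Finset.range (h + 1), (-1 : ℝ) ^ j * (h.choose j) * (max (x - j) 0) ^ (h - 1)
  else 0

end HM

/-!
Let `D` be the set of injective `h`-tuples from `A`. Permuting a tuple by a permutation that
fixes the coefficient vector does not change its `L`-value, so every value taken on `D` is taken
at least `θ_L` times, and more often only in the presence of a *collision*: two injective tuples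
with the same value that are not related by such a permutation. Hence
`|θ_L |L(A)| - |D|| ≤ θ_L · #(non-injective tuples) + #collisions`.

`E|D| = (N+1)_h p^h ∼ (Np)^h`, and `Var |D|` is a sum of `p^k` over pairs of injective tuples
with `k < 2h` distinct entries, which is `O((Np)^(2h-1))`. A non-injective tuple has `k < h`
distinct entries, so these contribute `O((Np)^(h-1))`. For a collision with `k` distinct entries
the relation `L(a) = L(b)`, after merging equal entries, keeps a nonzero coefficient (otherwise
`a` and `b` would be related by such a permutation), so only `k - 1` entries are free and the
contribution is `O(p (Np)^(k-1))`, at most `O((Np)^h · p (Np)^(h-1))` as `k ≤ 2h`; subcriticality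
says exactly that `p (Np)^(h-1) = (p N^((h-1)/h))^h → 0`. Chebyshev for `|D|` and Markov for the
error terms finish the proof.
-/

open Topology

namespace HM

section Coin

variable {n : ℕ} {p : ℝ}

def coinWeight (p : ℝ) (ω : Fin n → Bool) : ℝ := ∏ i, if ω i then p else 1 - p

def coinExp (p : ℝ) (X : (Fin n → Bool) → ℝ) : ℝ := ∑ ω, coinWeight p ω * X ω

def coinVar (p : ℝ) (X : (Fin n → Bool) → ℝ) : ℝ := coinExp p fun ω => (X ω - coinExp p X) ^ 2

lemma coinWeight_nonneg (hp0 : 0 ≤ p) (hp1 : p ≤ 1) (ω : Fin n → Bool) : 0 ≤ coinWeight p ω :=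
  prod_nonneg fun i _ => by cases ω i <;> simp <;> linarith

lemma coinExp_nonneg (hp0 : 0 ≤ p) (hp1 : p ≤ 1) {X : (Fin n → Bool) → ℝ} (hX : ∀ ω, 0 ≤ X ω) :
    0 ≤ coinExp p X :=
  sum_nonneg fun ω _ => mul_nonneg (coinWeight_nonneg hp0 hp1 ω) (hX ω)

lemma sum_coinWeight_filter_forall_mem (S : Finset (Fin n)) :
    ∑ ω with ∀ x ∈ S, ω x = true, coinWeight p ω = p ^ #S := by
  have hfilter : ({ω | ∀ x ∈ S, ω x = true} : Finset (Fin n → Bool))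
      = Fintype.piFinset fun i => if i ∈ S then {true} else univ := by
    ext ω
    simp only [mem_filter, mem_univ, true_and, Fintype.mem_piFinset]
    refine ⟨fun hω i => ?_, fun hω x hx => by simpa [hx] using hω x⟩
    split_ifs with hi <;> simp [hω i, hi]
  have hfactor (i : Fin n) : ∑ b ∈ (if i ∈ S then {true} else univ), (if b then p else 1 - p)
      = if i ∈ S then p else 1 := by
    split_ifs <;> simp
  rw [hfilter]
  simp only [coinWeight]
  rw [← prod_univ_sum (fun i => if i ∈ S then {true} else univ) fun _ b => if b then p else 1 - p]
  simp only [hfactor, prod_ite_mem, univ_inter, prod_const]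

lemma sum_coinWeight (p : ℝ) : ∑ ω : Fin n → Bool, coinWeight p ω = 1 := by
  simpa using sum_coinWeight_filter_forall_mem (p := p) (n := n) ∅

lemma coinExp_eq_sum_pow_card {α : Type*} (T : Finset α) (rng : α → Finset (Fin n))
    {X : (Fin n → Bool) → ℝ} (hX : ∀ ω, X ω = #{a ∈ T | ∀ x ∈ rng a, ω x = true}) :
    coinExp p X = ∑ a ∈ T, p ^ #(rng a) := by
  simp only [coinExp, hX, card_filter, Nat.cast_sum, Nat.cast_ite, Nat.cast_one, Nat.cast_zero,
    mul_sum, mul_ite, mul_one, mul_zero]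
  rw [sum_comm]
  refine sum_congr rfl fun a _ => ?_
  rw [← sum_filter, sum_coinWeight_filter_forall_mem]

lemma coinExp_add (X Y : (Fin n → Bool) → ℝ) :
    coinExp p (fun ω => X ω + Y ω) = coinExp p X + coinExp p Y := by
  simp only [coinExp, mul_add, sum_add_distrib]

lemma coinExp_const_mul (c : ℝ) (X : (Fin n → Bool) → ℝ) :
    coinExp p (fun ω => c * X ω) = c * coinExp p X := by
  simp only [coinExp, mul_sum]
  exact sum_congr rfl fun ω _ => by ring

lemma coinVar_eq (X : (Fin n → Bool) → ℝ) :
    coinVar p X = coinExp p (fun ω => X ω ^ 2) - coinExp p X ^ 2 := by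
  have hexpand : ∀ ω, (X ω - coinExp p X) ^ 2
      = X ω ^ 2 + (-2 * coinExp p X) * X ω + coinExp p X ^ 2 * 1 := fun ω => by ring
  simp only [coinVar, hexpand, coinExp_add, coinExp_const_mul]
  simp only [coinExp, mul_one, sum_coinWeight]
  ring

variable {N : ℕ}

lemma coin_singleton (hp0 : 0 ≤ p) (hp1 : p ≤ 1) (ω : Fin (N + 1) → Bool) :
    coin N p {ω} = ENNReal.ofReal (coinWeight p ω) := by
  rw [coin, ← Set.univ_pi_singleton, Measure.pi_pi, coinWeight,
    ENNReal.ofReal_prod_of_nonneg fun i _ => by cases ω i <;> simp <;> linarith]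
  refine prod_congr rfl fun i _ => ?_
  cases ω i <;> simp [bern, Measure.dirac_apply']

lemma coin_le_ofReal_coinExp_div (hp0 : 0 ≤ p) (hp1 : p ≤ 1) {X : (Fin (N + 1) → Bool) → ℝ}
    (hX : ∀ ω, 0 ≤ X ω) {t : ℝ} (ht : 0 < t) :
    coin N p {ω | t ≤ X ω} ≤ ENNReal.ofReal (coinExp p X / t) := by
  have hw := coinWeight_nonneg hp0 hp1 (n := N + 1)
  have hevent : {ω | t ≤ X ω} = ↑({ω | t ≤ X ω} : Finset (Fin (N + 1) → Bool)) := by simp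
  rw [hevent, ← sum_measure_singleton]
  simp only [coin_singleton hp0 hp1]
  rw [← ENNReal.ofReal_sum_of_nonneg fun ω _ => hw ω]
  refine ENNReal.ofReal_le_ofReal ((le_div_iff₀ ht).2 ?_)
  calc (∑ ω with t ≤ X ω, coinWeight p ω) * t = ∑ ω with t ≤ X ω, coinWeight p ω * t := sum_mul ..
    _ ≤ ∑ ω with t ≤ X ω, coinWeight p ω * X ω :=
        sum_le_sum fun ω hω => mul_le_mul_of_nonneg_left (mem_filter.1 hω).2 (hw ω)
    _ ≤ coinExp p X :=
        sum_le_sum_of_subset_of_nonneg (filter_subset _ _) fun ω _ _ => mul_nonneg (hw ω) (hX ω)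

lemma coin_lt_abs_div_sub_one_le {ε φ : ℝ} (hp0 : 0 ≤ p) (hp1 : p ≤ 1) (hε : 0 < ε)
    (hφ : 0 < φ) {X D E : (Fin (N + 1) → Bool) → ℝ} (hXD : ∀ ω, |X ω - D ω| ≤ E ω)
    (hmean : |coinExp p D / φ - 1| ≤ ε / 2) :
    coin N p {ω | ε < |X ω / φ - 1|}
      ≤ ENNReal.ofReal ((4 / ε) ^ 2 * (coinVar p D / φ ^ 2))
        + ENNReal.ofReal (4 / ε * (coinExp p E / φ)) := by
  set s := ε / 4 * φ
  have hs : 0 < s := by positivity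
  have hmean' : |coinExp p D - φ| ≤ ε / 2 * φ := by
    rwa [div_sub_one hφ.ne', abs_div, abs_of_pos hφ, div_le_iff₀ hφ] at hmean
  have hevent : {ω | ε < |X ω / φ - 1|}
      ⊆ {ω | s ^ 2 ≤ (D ω - coinExp p D) ^ 2} ∪ {ω | s ≤ E ω} := by
    intro ω hω
    by_contra hnot
    simp only [Set.mem_union, Set.mem_ofPred_eq, not_or, not_le] at hω hnot
    have hD : |D ω - coinExp p D| < s := abs_lt_of_sq_lt_sq hnot.1 hs.le
    have hX : |X ω - φ| < ε * φ := by
      calc |X ω - φ| ≤ |X ω - D ω| + (|D ω - coinExp p D| + |coinExp p D - φ|) :=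
            (abs_sub_le _ _ _).trans (add_le_add le_rfl (abs_sub_le _ _ _))
        _ < ε * φ := by linarith [hXD ω, hnot.2, show s = ε / 4 * φ from rfl]
    rw [div_sub_one hφ.ne', abs_div, abs_of_pos hφ, lt_div_iff₀ hφ] at hω
    linarith
  calc coin N p {ω | ε < |X ω / φ - 1|}
      ≤ coin N p {ω | s ^ 2 ≤ (D ω - coinExp p D) ^ 2} + coin N p {ω | s ≤ E ω} :=
        (measure_mono hevent).trans (measure_union_le _ _)
    _ ≤ ENNReal.ofReal (coinVar p D / s ^ 2) + ENNReal.ofReal (coinExp p E / s) :=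
        add_le_add (coin_le_ofReal_coinExp_div hp0 hp1 (fun ω => sq_nonneg _) (by positivity))
          (coin_le_ofReal_coinExp_div hp0 hp1 (fun ω => (abs_nonneg _).trans (hXD ω)) hs)
    _ = _ := by
        congr 2 <;> field_simp <;> ring

end Coin

section ImageCount

variable {ι α : Type*} [Fintype ι] [DecidableEq α]

lemma exists_injective_comp_eq (c : ι → α) :
    ∃ (π : ι → Fin #(univ.image c)) (e : Fin #(univ.image c) → α), e.Injective ∧ e ∘ π = c :=
  ⟨fun i => (univ.image c).equivFin ⟨c i, mem_image_of_mem c (mem_univ i)⟩,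
    fun m => ((univ.image c).equivFin.symm m : α),
    Subtype.val_injective.comp (univ.image c).equivFin.symm.injective,
    funext fun i => by simp⟩

lemma card_filter_card_image_eq_le [DecidableEq ι] [Fintype α] (r : ℕ) :
    #{c : ι → α | #(univ.image c) = r} ≤ r ^ Fintype.card ι * Fintype.card α ^ r := by
  calc #{c : ι → α | #(univ.image c) = r}
      ≤ #((univ : Finset ((ι → Fin r) × (Fin r → α))).image fun x => x.2 ∘ x.1) := by
        refine card_le_card fun c hc => ?_
        obtain rfl := (mem_filter.1 hc).2
        obtain ⟨π, e, -, hce⟩ := exists_injective_comp_eq c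
        exact mem_image.2 ⟨(π, e), mem_univ _, hce⟩
    _ ≤ r ^ Fintype.card ι * Fintype.card α ^ r := by
        refine card_image_le.trans ?_
        simp

lemma card_filter_sum_mul_eq_zero_le {κ : Type*} [Fintype κ] [DecidableEq κ] {M : ℕ}
    (v : κ → ℤ) {m₀ : κ} (hv : v m₀ ≠ 0) :
    #{e : κ → Fin M | ∑ m, v m * ((e m : ℕ) : ℤ) = 0} ≤ M ^ (Fintype.card κ - 1) := by
  calc #{e : κ → Fin M | ∑ m, v m * ((e m : ℕ) : ℤ) = 0}
      ≤ #(univ : Finset ({m // m ≠ m₀} → Fin M)) := by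
        refine card_le_card_of_injOn (fun e m => e m) (fun _ _ => mem_univ _) ?_
        intro e he e' he' hee'
        have hoff : ∀ m ≠ m₀, e m = e' m := fun m hm => congrFun hee' ⟨m, hm⟩
        rw [mem_coe, mem_filter] at he he'
        have hdiff : v m₀ * (((e m₀ : ℕ) : ℤ) - ((e' m₀ : ℕ) : ℤ)) = 0 := by
          calc v m₀ * (((e m₀ : ℕ) : ℤ) - ((e' m₀ : ℕ) : ℤ))
              = ∑ m, v m * (((e m : ℕ) : ℤ) - ((e' m : ℕ) : ℤ)) :=
                (Fintype.sum_eq_single (f := fun m => v m * (((e m : ℕ) : ℤ) - ((e' m : ℕ) : ℤ)))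
                  m₀ fun m hm => by simp only [hoff m hm, sub_self, mul_zero]).symm
            _ = 0 := by simp only [mul_sub, sum_sub_distrib, he.2, he'.2, sub_self]
        funext m
        by_cases hm : m = m₀
        · subst hm
          exact Fin.ext (by exact_mod_cast sub_eq_zero.1 ((mul_eq_zero.1 hdiff).resolve_left hv))
        · exact hoff m hm
    _ = M ^ (Fintype.card κ - 1) := by simp

lemma exists_comp_eq_of_relation {M : ℕ} (w : ι → ℤ) {c : ι → Fin M}
    (hrel : ∑ i, w i * ((c i : ℕ) : ℤ) = 0) {x : Fin M} (hx : ∑ i with c i = x, w i ≠ 0) :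
    ∃ (π : ι → Fin #(univ.image c)) (e : Fin #(univ.image c) → Fin M),
      (∑ m, (∑ i with π i = m, w i) * ((e m : ℕ) : ℤ) = 0 ∧ ∃ m, ∑ i with π i = m, w i ≠ 0) ∧
      e ∘ π = c := by
  obtain ⟨π, e, he, hce⟩ := exists_injective_comp_eq c
  have hfiber (m) : univ.filter (π · = m) = univ.filter (c · = e m) := by
    ext i
    simp [← hce, he.eq_iff]
  have hrel' : ∑ m, (∑ i with π i = m, w i) * ((e m : ℕ) : ℤ) = 0 := by
    calc ∑ m, (∑ i with π i = m, w i) * ((e m : ℕ) : ℤ)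
        = ∑ m, ∑ i with π i = m, w i * ((e (π i) : ℕ) : ℤ) := by
          simp only [sum_mul]
          exact sum_congr rfl fun m _ => sum_congr rfl fun i hi => by rw [(mem_filter.1 hi).2]
      _ = 0 := by rw [sum_fiberwise]; simpa [← hce] using hrel
  obtain ⟨i₀, hi₀⟩ : (univ.filter (c · = x)).Nonempty := nonempty_of_sum_ne_zero hx
  have hnondeg : ∑ i with π i = π i₀, w i ≠ 0 := by
    rwa [hfiber, ← Function.comp_apply (f := e), hce, (mem_filter.1 hi₀).2]
  exact ⟨π, e, ⟨hrel', π i₀, hnondeg⟩, hce⟩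

/-- Writing `c = e ∘ π` with `e` injective, the relation becomes a linear relation on `e` with a
nonzero coefficient, which determines one value of `e` from the others. -/
lemma card_filter_nondegenerate_relation_le [DecidableEq ι] {M : ℕ} (w : ι → ℤ) (r : ℕ) :
    #{c : ι → Fin M | ∑ i, w i * ((c i : ℕ) : ℤ) = 0 ∧ #(univ.image c) = r ∧
        ∃ x, ∑ i with c i = x, w i ≠ 0} ≤ r ^ Fintype.card ι * M ^ (r - 1) := by
  set T : (ι → Fin r) → Finset (Fin r → Fin M) := fun π =>
    {e | ∑ m, (∑ i with π i = m, w i) * ((e m : ℕ) : ℤ) = 0 ∧ ∃ m, ∑ i with π i = m, w i ≠ 0}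
  have hT (π : ι → Fin r) : #(T π) ≤ M ^ (r - 1) := by
    by_cases hπ : ∃ m, ∑ i with π i = m, w i ≠ 0
    · obtain ⟨m₀, hm₀⟩ := hπ
      calc #(T π) ≤ #{e : Fin r → Fin M | ∑ m, (∑ i with π i = m, w i) * ((e m : ℕ) : ℤ) = 0} :=
            card_le_card fun e he => by
              simp only [T, mem_filter] at he ⊢
              exact ⟨he.1, he.2.1⟩
        _ ≤ M ^ (r - 1) := by
            simpa using card_filter_sum_mul_eq_zero_le (M := M) (fun m => ∑ i with π i = m, w i) hm₀
    · simp only [T, not_exists.1 hπ, exists_false, and_false, filter_false, card_empty]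
      exact Nat.zero_le _
  calc #{c : ι → Fin M | ∑ i, w i * ((c i : ℕ) : ℤ) = 0 ∧ #(univ.image c) = r ∧
        ∃ x, ∑ i with c i = x, w i ≠ 0}
      ≤ #(univ.biUnion fun π => (T π).image (· ∘ π)) := by
        refine card_le_card fun c hc => ?_
        obtain ⟨hrel, rfl, x, hx⟩ := (mem_filter.1 hc).2
        obtain ⟨π, e, he, hce⟩ := exists_comp_eq_of_relation w hrel hx
        exact mem_biUnion.2 ⟨π, mem_univ _, mem_image.2 ⟨e, mem_filter.2 ⟨mem_univ _, he⟩, hce⟩⟩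
    _ ≤ ∑ π, #(T π) := card_biUnion_le.trans (sum_le_sum fun π _ => card_image_le)
    _ ≤ r ^ Fintype.card ι * M ^ (r - 1) := by
        simpa using sum_le_sum fun π (_ : π ∈ univ) => hT π

end ImageCount

lemma sum_filter_sum_elim {ι α M : Type*} [Fintype ι] [DecidableEq α] [AddCommMonoid M]
    (a b : ι → α) (f g : ι → M) (x : α) :
    ∑ i with Sum.elim a b i = x, Sum.elim f g i
      = ∑ i with a i = x, f i + ∑ i with b i = x, g i := by
  simp only [sum_filter, Fintype.sum_sum_type, Sum.elim_inl, Sum.elim_inr]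
  rfl

section Decomposition

variable {h N : ℕ} (u : Fin h → ℤ)

def lval (a : Fin h → Fin (N + 1)) : ℤ := ∑ i, u i * ((a i : ℕ) : ℤ)

def coeffStabilizer : Finset (Equiv.Perm (Fin h)) := univ.filter fun σ => ∀ i, u (σ i) = u i

lemma thetaL_eq_card_coeffStabilizer : thetaL h u = #(coeffStabilizer u) := by
  rw [thetaL, Nat.card_eq_fintype_card, Fintype.card_subtype, coeffStabilizer]

variable {u}

lemma inv_mem_coeffStabilizer {σ : Equiv.Perm (Fin h)} (hσ : σ ∈ coeffStabilizer u) :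
    σ⁻¹ ∈ coeffStabilizer u := by
  simp only [coeffStabilizer, mem_filter, mem_univ, true_and] at hσ ⊢
  intro i
  simpa using (hσ (σ⁻¹ i)).symm

lemma lval_comp_of_mem_coeffStabilizer (a : Fin h → Fin (N + 1)) {σ : Equiv.Perm (Fin h)}
    (hσ : σ ∈ coeffStabilizer u) : lval u (a ∘ σ) = lval u a := by
  simp only [coeffStabilizer, mem_filter, mem_univ, true_and] at hσ
  simp only [lval, Function.comp_apply]
  rw [← Equiv.sum_comp σ fun i => u i * ((a i : ℕ) : ℤ)]
  simp [hσ]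

variable (ω : Fin (N + 1) → Bool)

variable (h) in
def tuplesIn : Finset (Fin h → Fin (N + 1)) := univ.filter fun a => ∀ i, ω (a i) = true

variable (h) in
def injTuplesIn : Finset (Fin h → Fin (N + 1)) := {a ∈ tuplesIn h ω | a.Injective}

variable (h) in
def nonInjTuplesIn : Finset (Fin h → Fin (N + 1)) := {a ∈ tuplesIn h ω | ¬a.Injective}

variable (u) in
def collisions : Finset ((Fin h → Fin (N + 1)) × (Fin h → Fin (N + 1))) :=
  {q ∈ injTuplesIn h ω ×ˢ injTuplesIn h ω |
    lval u q.1 = lval u q.2 ∧ ∀ σ ∈ coeffStabilizer u, q.1 ≠ q.2 ∘ σ}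

variable {ω}

lemma comp_perm_mem_injTuplesIn {a : Fin h → Fin (N + 1)} (ha : a ∈ injTuplesIn h ω)
    (σ : Equiv.Perm (Fin h)) : a ∘ σ ∈ injTuplesIn h ω := by
  simp only [injTuplesIn, tuplesIn, mem_filter, mem_univ, true_and] at ha ⊢
  exact ⟨fun i => ha.1 (σ i), ha.2.comp σ.injective⟩

lemma card_coeffStabilizer_mul_card_image_le :
    #(coeffStabilizer u) * #((injTuplesIn h ω).image (lval u)) ≤ #(injTuplesIn h ω) := by
  refine mul_card_image_le_card _ _ fun v hv => ?_
  obtain ⟨a, ha, rfl⟩ := mem_image.1 hv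
  refine card_le_card_of_injOn (fun σ : Equiv.Perm (Fin h) => a ∘ σ) (fun σ hσ => ?_)
    fun σ _ τ _ hστ => ?_
  · exact mem_filter.2 ⟨comp_perm_mem_injTuplesIn ha σ, lval_comp_of_mem_coeffStabilizer a hσ⟩
  · exact Equiv.ext fun i => (mem_filter.1 ha).2 (congrFun hστ i)

lemma card_fiber_lval_le {a : Fin h → Fin (N + 1)} (ha : a ∈ injTuplesIn h ω) :
    #{b ∈ injTuplesIn h ω | lval u b = lval u a}
      ≤ #(coeffStabilizer u) + #{q ∈ collisions u ω | lval u q.1 = lval u a} := by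
  calc #{b ∈ injTuplesIn h ω | lval u b = lval u a}
      ≤ #((coeffStabilizer u).image (fun σ : Equiv.Perm (Fin h) => a ∘ σ) ∪
          {q ∈ collisions u ω | lval u q.1 = lval u a}.image Prod.snd) := by
        refine card_le_card fun b hb => ?_
        obtain ⟨hb, hba⟩ := mem_filter.1 hb
        by_cases horbit : ∃ σ ∈ coeffStabilizer u, a ∘ σ = b
        · exact mem_union_left _ (mem_image.2 horbit)
        · refine mem_union_right _ (mem_image.2 ⟨(a, b), mem_filter.2 ⟨mem_filter.2
            ⟨mem_product.2 ⟨ha, hb⟩, hba.symm, fun σ hσ hab => horbit ⟨σ⁻¹,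
              inv_mem_coeffStabilizer hσ, ?_⟩⟩, rfl⟩, rfl⟩)
          ext i
          simp [show a = b ∘ σ from hab]
    _ ≤ #(coeffStabilizer u) + #{q ∈ collisions u ω | lval u q.1 = lval u a} :=
        (card_union_le _ _).trans (add_le_add card_image_le card_image_le)

lemma card_injTuplesIn_le :
    #(injTuplesIn h ω)
      ≤ #(coeffStabilizer u) * #((injTuplesIn h ω).image (lval u)) + #(collisions u ω) := by
  set Y := (injTuplesIn h ω).image (lval u)
  calc #(injTuplesIn h ω) = ∑ v ∈ Y, #{b ∈ injTuplesIn h ω | lval u b = v} :=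
        card_eq_sum_card_fiberwise (f := lval u) fun a ha => mem_image_of_mem _ ha
    _ ≤ ∑ v ∈ Y, (#(coeffStabilizer u) + #{q ∈ collisions u ω | lval u q.1 = v}) := by
        refine sum_le_sum fun v hv => ?_
        obtain ⟨a, ha, rfl⟩ := mem_image.1 hv
        exact card_fiber_lval_le ha
    _ ≤ #(coeffStabilizer u) * #Y + #(collisions u ω) := by
        rw [sum_add_distrib, sum_const, smul_eq_mul, mul_comm, sum_card_fiberwise_eq_card_filter]
        gcongr
        exact filter_subset _ _

lemma card_LA_le : #(LA h N u ω) ≤ #((injTuplesIn h ω).image (lval u)) + #(nonInjTuplesIn h ω) :=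
  calc #(LA h N u ω)
      = #((injTuplesIn h ω).image (lval u) ∪ (nonInjTuplesIn h ω).image (lval u)) := by
        rw [← image_union, injTuplesIn, nonInjTuplesIn, filter_union_filter_not_eq]; rfl
    _ ≤ _ := (card_union_le _ _).trans (add_le_add le_rfl card_image_le)

lemma image_lval_injTuplesIn_subset : (injTuplesIn h ω).image (lval u) ⊆ LA h N u ω :=
  image_subset_image (filter_subset _ _)

lemma abs_thetaL_mul_card_LA_sub_le :
    |(thetaL h u : ℝ) * #(LA h N u ω) - #(injTuplesIn h ω)|
      ≤ (thetaL h u : ℝ) * #(nonInjTuplesIn h ω) + #(collisions u ω) := by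
  have hLA : (#(LA h N u ω) : ℝ) ≤ #((injTuplesIn h ω).image (lval u)) + #(nonInjTuplesIn h ω) := by
    exact_mod_cast card_LA_le
  have hY : (#((injTuplesIn h ω).image (lval u)) : ℝ) ≤ #(LA h N u ω) := by
    exact_mod_cast card_le_card image_lval_injTuplesIn_subset
  have hinj : (#(injTuplesIn h ω) : ℝ)
      ≤ #(coeffStabilizer u) * #((injTuplesIn h ω).image (lval u)) + #(collisions u ω) := by
    exact_mod_cast card_injTuplesIn_le
  have hstab : (#(coeffStabilizer u) : ℝ) * #((injTuplesIn h ω).image (lval u))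
      ≤ #(injTuplesIn h ω) := by
    exact_mod_cast card_coeffStabilizer_mul_card_image_le
  have hθ : (0 : ℝ) ≤ #(coeffStabilizer u) := Nat.cast_nonneg _
  rw [thetaL_eq_card_coeffStabilizer, abs_le]
  constructor <;> nlinarith

lemma exists_mem_coeffStabilizer_of_fiber_sums_eq (hu : ∀ i, u i ≠ 0)
    {a b : Fin h → Fin (N + 1)} (ha : a.Injective) (hb : b.Injective)
    (hfiber : ∀ x, ∑ i with a i = x, u i = ∑ j with b j = x, u j) :
    ∃ σ ∈ coeffStabilizer u, a = b ∘ σ := by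
  have hmatch (i : Fin h) : ∃ j, b j = a i ∧ u j = u i := by
    have hsum : ∑ j with b j = a i, u j = u i := by
      rw [← hfiber]
      simp [ha.eq_iff, filter_eq']
    obtain ⟨j, hj⟩ : (univ.filter (b · = a i)).Nonempty := nonempty_of_sum_ne_zero (hsum ▸ hu i)
    refine ⟨j, (mem_filter.1 hj).2, ?_⟩
    rwa [sum_eq_single_of_mem j hj fun k hk hkj =>
      absurd (hb ((mem_filter.1 hk).2.trans (mem_filter.1 hj).2.symm)) hkj] at hsum
  choose f hf using hmatch
  have hf_inj : f.Injective := fun i i' hii' => ha (by rw [← (hf i).1, ← (hf i').1, hii'])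
  refine ⟨Equiv.ofBijective f hf_inj.bijective_of_finite, ?_, funext fun i => (hf i).1.symm⟩
  simp [coeffStabilizer, (hf _).2]

lemma exists_fiber_sum_ne_zero_of_mem_collisions (hu : ∀ i, u i ≠ 0)
    {q : (Fin h → Fin (N + 1)) × (Fin h → Fin (N + 1))} (hq : q ∈ collisions u ω) :
    ∃ x, ∑ i with Sum.elim q.1 q.2 i = x, Sum.elim u (-u) i ≠ 0 := by
  simp only [collisions, injTuplesIn, mem_filter, mem_product] at hq
  obtain ⟨⟨⟨-, ha⟩, -, hb⟩, -, hnotorbit⟩ := hq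
  by_contra! hzero
  obtain ⟨σ, hσ, horbit⟩ := exists_mem_coeffStabilizer_of_fiber_sums_eq hu ha hb fun x => by
    have := hzero x
    rw [sum_filter_sum_elim, Pi.neg_def, sum_neg_distrib, ← sub_eq_add_neg, sub_eq_zero] at this
    exact this
  exact hnotorbit σ hσ horbit

lemma sum_sum_elim_mul_eq_zero_of_mem_collisions
    {q : (Fin h → Fin (N + 1)) × (Fin h → Fin (N + 1))} (hq : q ∈ collisions u ω) :
    ∑ i, Sum.elim u (-u) i * ((Sum.elim q.1 q.2 i : Fin (N + 1)) : ℤ) = 0 := by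
  have hlval : lval u q.1 = lval u q.2 := (mem_filter.1 hq).2.1
  simp only [lval] at hlval
  simp [Fintype.sum_sum_type, hlval]

end Decomposition

section Expectation

variable {h N : ℕ} {p : ℝ} {ω : Fin (N + 1) → Bool}

lemma injTuplesIn_eq_filter : injTuplesIn h ω
    = {a ∈ injTuplesIn h (fun _ => true) | ∀ x ∈ univ.image a, ω x = true} := by
  ext a
  simp [injTuplesIn, tuplesIn, and_comm]

lemma nonInjTuplesIn_eq_filter : nonInjTuplesIn h ω
    = {a ∈ nonInjTuplesIn h (fun _ => true) | ∀ x ∈ univ.image a, ω x = true} := by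
  ext a
  simp [nonInjTuplesIn, tuplesIn, and_comm]

lemma injTuplesIn_product_eq_filter : injTuplesIn h ω ×ˢ injTuplesIn h ω
    = {q ∈ injTuplesIn h (fun _ => true) ×ˢ injTuplesIn h (fun _ => true) |
        ∀ x ∈ univ.image (Sum.elim q.1 q.2), ω x = true} := by
  ext q
  simp only [injTuplesIn, tuplesIn, mem_product, mem_filter, mem_univ, true_and, forall_mem_image,
    forall_const, Sum.forall, Sum.elim_inl, Sum.elim_inr]
  tauto

lemma collisions_eq_filter (u : Fin h → ℤ) : collisions u ω
    = {q ∈ collisions u (fun _ => true) | ∀ x ∈ univ.image (Sum.elim q.1 q.2), ω x = true} := by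
  rw [collisions, collisions, injTuplesIn_product_eq_filter, filter_filter, filter_filter]
  exact filter_congr fun q _ => and_comm

lemma card_injTuplesIn_univ :
    #(injTuplesIn h (fun _ : Fin (N + 1) => true)) = (N + 1).descFactorial h := by
  have hall : injTuplesIn h (fun _ : Fin (N + 1) => true) = univ.filter Function.Injective := by
    ext a
    simp [injTuplesIn, tuplesIn]
  rw [hall, ← Fintype.card_subtype, Fintype.card_congr (Equiv.subtypeInjectiveEquivEmbedding _ _),
    Fintype.card_embedding_eq, Fintype.card_fin, Fintype.card_fin]

lemma coinExp_card_injTuplesIn :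
    coinExp p (fun ω : Fin (N + 1) → Bool => #(injTuplesIn h ω))
      = (N + 1).descFactorial h * p ^ h := by
  rw [coinExp_eq_sum_pow_card _ _ fun ω => by rw [injTuplesIn_eq_filter],
    sum_congr rfl fun a ha => by rw [card_image_of_injective _ (mem_filter.1 ha).2, card_univ,
    Fintype.card_fin], sum_const, card_injTuplesIn_univ, nsmul_eq_mul]

lemma coinExp_sq_card_injTuplesIn :
    coinExp p (fun ω : Fin (N + 1) → Bool => (#(injTuplesIn h ω) : ℝ) ^ 2)
      = ∑ q ∈ injTuplesIn h (fun _ : Fin (N + 1) => true) ×ˢ injTuplesIn h (fun _ => true),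
          p ^ #(univ.image (Sum.elim q.1 q.2)) := by
  exact coinExp_eq_sum_pow_card _ _ fun ω => by
    rw [sq, ← Nat.cast_mul, ← card_product, injTuplesIn_product_eq_filter]

lemma sum_pow_card_le {γ α : Type*} (F : Finset γ) (rg : γ → Finset α) (K : Finset ℕ)
    (hK : ∀ q ∈ F, #(rg q) ∈ K) (B : ℕ → ℕ) (hB : ∀ k ∈ K, #{q ∈ F | #(rg q) = k} ≤ B k)
    (hp : 0 ≤ p) : ∑ q ∈ F, p ^ #(rg q) ≤ ∑ k ∈ K, (B k : ℝ) * p ^ k := by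
  rw [← sum_fiberwise_of_maps_to hK]
  refine sum_le_sum fun k hk => ?_
  rw [sum_congr rfl fun q hq => by rw [(mem_filter.1 hq).2], sum_const, nsmul_eq_mul]
  exact mul_le_mul_of_nonneg_right (by exact_mod_cast hB k hk) (pow_nonneg hp k)

lemma card_filter_card_image_sum_elim_le
    (F : Finset ((Fin h → Fin (N + 1)) × (Fin h → Fin (N + 1))))
    (P : (Fin h ⊕ Fin h → Fin (N + 1)) → Prop) [DecidablePred P]
    (hP : ∀ q ∈ F, P (Sum.elim q.1 q.2)) : #F ≤ #{c | P c} :=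
  card_le_card_of_injOn (fun q => Sum.elim q.1 q.2) (fun q hq => mem_filter.2 ⟨mem_univ _, hP q hq⟩)
    fun _ _ _ _ hqq' => Prod.ext (funext fun i => congrFun hqq' (.inl i))
      (funext fun i => congrFun hqq' (.inr i))

lemma card_image_sum_elim_le (q : (Fin h → Fin (N + 1)) × (Fin h → Fin (N + 1))) :
    #(univ.image (Sum.elim q.1 q.2)) ≤ 2 * h := by
  simpa [two_mul] using card_image_le (s := univ) (f := Sum.elim q.1 q.2)

lemma coinVar_card_injTuplesIn_le (hp : 0 ≤ p) :
    coinVar p (fun ω : Fin (N + 1) → Bool => #(injTuplesIn h ω))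
      ≤ ∑ k ∈ range (2 * h), ((k ^ (2 * h) * (N + 1) ^ k : ℕ) : ℝ) * p ^ k := by
  set I := injTuplesIn h (fun _ : Fin (N + 1) => true)
  have hmean_sq : ((N + 1).descFactorial h * p ^ h : ℝ) ^ 2 = ∑ _q ∈ I ×ˢ I, p ^ (2 * h) := by
    rw [sum_const, card_product, card_injTuplesIn_univ, nsmul_eq_mul]
    push_cast
    ring
  rw [coinVar_eq, coinExp_sq_card_injTuplesIn, coinExp_card_injTuplesIn, hmean_sq,
    ← sum_sub_distrib,
    ← sum_filter_add_sum_filter_not _ fun q => #(univ.image (Sum.elim q.1 q.2)) = 2 * h,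
    sum_eq_zero fun q hq => by rw [(mem_filter.1 hq).2, sub_self], zero_add]
  calc _ ≤ ∑ q ∈ I ×ˢ I with ¬#(univ.image (Sum.elim q.1 q.2)) = 2 * h,
        p ^ #(univ.image (Sum.elim q.1 q.2)) :=
        sum_le_sum fun q _ => sub_le_self _ (pow_nonneg hp _)
    _ ≤ _ := by
        refine sum_pow_card_le _ _ _ (fun q hq => mem_range.2
          ((card_image_sum_elim_le q).lt_of_ne (mem_filter.1 hq).2)) _ (fun k _ => ?_) hp
        refine (card_filter_card_image_sum_elim_le _ (fun c => #(univ.image c) = k)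
          fun q hq => (mem_filter.1 hq).2).trans ?_
        simpa [two_mul] using card_filter_card_image_eq_le (ι := Fin h ⊕ Fin h) (α := Fin (N + 1)) k

lemma coinExp_card_nonInjTuplesIn_le (hp : 0 ≤ p) :
    coinExp p (fun ω : Fin (N + 1) → Bool => #(nonInjTuplesIn h ω))
      ≤ ∑ k ∈ range h, ((k ^ h * (N + 1) ^ k : ℕ) : ℝ) * p ^ k := by
  rw [coinExp_eq_sum_pow_card _ _ fun ω => by rw [nonInjTuplesIn_eq_filter]]
  refine sum_pow_card_le _ _ _ (fun a ha => mem_range.2 ?_) _ (fun k _ => ?_) hp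
  · have hle : #(univ.image a) ≤ h := card_image_le.trans_eq (by simp)
    refine hle.lt_of_ne fun heq => (mem_filter.1 ha).2 (Set.injOn_univ.1 ?_)
    simpa using card_image_iff.1 (heq.trans (by simp))
  · refine (card_le_card (s := {a ∈ nonInjTuplesIn h (fun _ => true) | #(univ.image a) = k})
      (monotone_filter_left _ (subset_univ _))).trans ?_
    simpa using card_filter_card_image_eq_le (ι := Fin h) (α := Fin (N + 1)) k

lemma coinExp_card_collisions_le (u : Fin h → ℤ) (hu : ∀ i, u i ≠ 0) (hh : 0 < h) (hp : 0 ≤ p) :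
    coinExp p (fun ω : Fin (N + 1) → Bool => #(collisions u ω))
      ≤ ∑ k ∈ Icc 1 (2 * h), ((k ^ (2 * h) * (N + 1) ^ (k - 1) : ℕ) : ℝ) * p ^ k := by
  rw [coinExp_eq_sum_pow_card _ _ fun ω => by rw [collisions_eq_filter]]
  refine sum_pow_card_le _ _ _ (fun q _ => mem_Icc.2 ⟨card_pos.2 ⟨_, mem_image_of_mem _
    (mem_univ (.inl ⟨0, hh⟩))⟩, card_image_sum_elim_le q⟩) _ (fun k _ => ?_) hp
  refine (card_filter_card_image_sum_elim_le _
    (fun c => ∑ i, Sum.elim u (-u) i * ((c i : ℕ) : ℤ) = 0 ∧ #(univ.image c) = k ∧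
      ∃ x, ∑ i with c i = x, Sum.elim u (-u) i ≠ 0) fun q hq => ?_).trans ?_
  · obtain ⟨hq, hk⟩ := mem_filter.1 hq
    exact ⟨sum_sum_elim_mul_eq_zero_of_mem_collisions hq, hk,
      exists_fiber_sum_ne_zero_of_mem_collisions hu hq⟩
  · simpa [two_mul] using card_filter_nondegenerate_relation_le (M := N + 1) (Sum.elim u (-u)) k

end Expectation

section Asymptotics

variable {h : ℕ} {p : ℕ → ℝ}

lemma tendsto_zero_of_le_sum {K : Finset ℕ} {f : ℕ → ℝ} (c : ℕ → ℝ) (g : ℕ → ℕ → ℝ)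
    (hf0 : ∀ N, 0 ≤ f N) (hf : ∀ N, f N ≤ ∑ k ∈ K, c k * g k N)
    (hg : ∀ k ∈ K, Tendsto (g k) atTop (𝓝 0)) : Tendsto f atTop (𝓝 0) := by
  have hsum := tendsto_finsetSum K fun k hk => (hg k hk).const_mul (c k)
  simp only [mul_zero, sum_const_zero] at hsum
  exact squeeze_zero hf0 hf hsum

lemma tendsto_succ_div_self : Tendsto (fun N : ℕ => ((N : ℝ) + 1) / N) atTop (𝓝 1) := by
  simpa using (tendsto_natCast_div_add_atTop (1 : ℝ)).inv₀ one_ne_zero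

lemma tendsto_succ_pow_mul_pow_div_pow {k m : ℕ} (hkm : k < m)
    (hNp : Tendsto (fun N : ℕ => (N : ℝ) * p N) atTop atTop) :
    Tendsto (fun N : ℕ => ((N : ℝ) + 1) ^ k * p N ^ k / ((N : ℝ) * p N) ^ m) atTop (𝓝 0) := by
  have hlim := (tendsto_succ_div_self.pow k).mul
    ((tendsto_pow_atTop (Nat.sub_ne_zero_of_lt hkm)).comp hNp).inv_tendsto_atTop
  rw [one_pow, one_mul] at hlim
  refine hlim.congr' ?_
  filter_upwards [hNp.eventually_ge_atTop 1] with N hx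
  have hx0 : (N : ℝ) * p N ≠ 0 := by positivity
  have hN0 : (N : ℝ) ≠ 0 := left_ne_zero_of_mul hx0
  simp only [Pi.inv_apply, Function.comp_apply]
  rw [← Nat.add_sub_cancel' hkm.le, pow_add, Nat.add_sub_cancel_left, div_pow]
  field_simp
  ring

lemma tendsto_mul_pow_pred_of_subcritical (hh : 0 < h)
    (hsub : Tendsto (fun N : ℕ => p N * (N : ℝ) ^ (((h : ℝ) - 1) / h)) atTop (𝓝 0)) :
    Tendsto (fun N : ℕ => p N * ((N : ℝ) * p N) ^ (h - 1)) atTop (𝓝 0) := by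
  have hlim := hsub.pow h
  rw [zero_pow hh.ne'] at hlim
  refine hlim.congr fun N => ?_
  have hexp : ((h : ℝ) - 1) / h * h = ((h - 1 : ℕ) : ℝ) := by
    rw [Nat.cast_sub hh, Nat.cast_one]
    field_simp
  rw [mul_pow, ← Real.rpow_natCast ((N : ℝ) ^ (((h : ℝ) - 1) / h)) h,
    ← Real.rpow_mul (Nat.cast_nonneg N), hexp, Real.rpow_natCast, mul_pow, ← Nat.sub_add_cancel hh,
    pow_succ', Nat.add_sub_cancel]
  ring

lemma tendsto_succ_pow_mul_pow_div_pow_of_le_two_mul {k : ℕ} (hk1 : 1 ≤ k) (hk2 : k ≤ 2 * h)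
    (hNp : Tendsto (fun N : ℕ => (N : ℝ) * p N) atTop atTop)
    (hcrit : Tendsto (fun N : ℕ => p N * ((N : ℝ) * p N) ^ (h - 1)) atTop (𝓝 0)) :
    Tendsto (fun N : ℕ => ((N : ℝ) + 1) ^ (k - 1) * p N ^ k / ((N : ℝ) * p N) ^ h)
      atTop (𝓝 0) := by
  have hlim := (tendsto_succ_div_self.pow (k - 1)).mul hcrit
  rw [mul_zero] at hlim
  refine squeeze_zero' ?_ ?_ hlim <;> filter_upwards [hNp.eventually_ge_atTop 1] with N hx
  <;> have hp : 0 < p N := by by_contra! hp; nlinarith [N.cast_nonneg (α := ℝ)]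
  · positivity
  obtain ⟨j, rfl⟩ : ∃ j, k = j + 1 := ⟨k - 1, by omega⟩
  have hN0 : (N : ℝ) ≠ 0 := by rintro hN; norm_num [hN] at hx
  -- `j < 2 * h` and `1 ≤ N p N`: this is where the collision terms are beaten by subcriticality
  have hratio : ((N : ℝ) * p N) ^ j / ((N : ℝ) * p N) ^ h ≤ ((N : ℝ) * p N) ^ (h - 1) := by
    rw [div_le_iff₀ (by positivity), ← pow_add]
    exact pow_le_pow_right₀ hx (by omega)
  calc ((N : ℝ) + 1) ^ (j + 1 - 1) * p N ^ (j + 1) / ((N : ℝ) * p N) ^ h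
      = (((N : ℝ) + 1) / N) ^ j * p N * (((N : ℝ) * p N) ^ j / ((N : ℝ) * p N) ^ h) := by
        rw [Nat.add_sub_cancel, div_pow, mul_pow, pow_succ]
        field_simp
        ring
    _ ≤ (((N : ℝ) + 1) / N) ^ j * p N * ((N : ℝ) * p N) ^ (h - 1) := by gcongr
    _ = _ := by rw [Nat.add_sub_cancel, mul_assoc]

lemma tendsto_descFactorial_div_pow (h : ℕ) :
    Tendsto (fun N : ℕ => ((N + 1).descFactorial h : ℝ) / (N : ℝ) ^ h) atTop (𝓝 1) := by
  have hlower : Tendsto (fun N : ℕ => (1 + (2 - h : ℝ) / N) ^ h) atTop (𝓝 1) := by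
    simpa using ((tendsto_const_div_atTop_nhds_zero_nat (2 - h : ℝ)).const_add 1).pow h
  have hupper : Tendsto (fun N : ℕ => (((N : ℝ) + 1) / N) ^ h) atTop (𝓝 1) := by
    simpa using tendsto_succ_div_self.pow h
  refine tendsto_of_tendsto_of_tendsto_of_le_of_le' hlower hupper ?_ ?_ <;>
    filter_upwards [eventually_ge_atTop (max h 1)] with N hN <;>
    have hN0 : (0 : ℝ) < N := by exact_mod_cast (le_max_right h 1).trans hN
  · have hcast : 1 + (2 - h : ℝ) / N = ((N + 1 + 1 - h : ℕ) : ℝ) / N := by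
      rw [Nat.cast_sub (by omega)]
      push_cast
      field_simp
      ring
    rw [hcast, div_pow]
    gcongr
    exact_mod_cast Nat.pow_sub_le_descFactorial (N + 1) h
  · rw [div_pow]
    gcongr
    exact_mod_cast Nat.descFactorial_le_pow (N + 1) h

end Asymptotics

section NormalizedMoments

variable {h : ℕ} {p : ℕ → ℝ}

lemma tendsto_coinExp_card_injTuplesIn_div (hp0 : ∀ N, 0 < p N) :
    Tendsto (fun N : ℕ => coinExp (p N) (fun ω : Fin (N + 1) → Bool => #(injTuplesIn h ω))
      / ((N : ℝ) * p N) ^ h) atTop (𝓝 1) :=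
  (tendsto_descFactorial_div_pow h).congr fun N => by
    rw [coinExp_card_injTuplesIn, mul_pow, mul_div_mul_right _ _ (pow_ne_zero h (hp0 N).ne')]

lemma tendsto_coinVar_card_injTuplesIn_div_sq (hp01 : ∀ N, p N ∈ Set.Ioo 0 1)
    (hNp : Tendsto (fun N : ℕ => (N : ℝ) * p N) atTop atTop) :
    Tendsto (fun N : ℕ => coinVar (p N) (fun ω : Fin (N + 1) → Bool => #(injTuplesIn h ω))
      / (((N : ℝ) * p N) ^ h) ^ 2) atTop (𝓝 0) := by
  refine tendsto_zero_of_le_sum (K := range (2 * h)) (fun k => (k : ℝ) ^ (2 * h)) _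
    (fun N => div_nonneg (coinExp_nonneg (hp01 N).1.le (hp01 N).2.le fun ω => sq_nonneg _)
      (sq_nonneg _)) (fun N => ?_) fun k hk => tendsto_succ_pow_mul_pow_div_pow (mem_range.1 hk) hNp
  rw [← pow_mul, mul_comm h 2]
  refine (div_le_div_of_nonneg_right (coinVar_card_injTuplesIn_le (hp01 N).1.le)
    (pow_nonneg (mul_nonneg N.cast_nonneg (hp01 N).1.le) _)).trans_eq ?_
  rw [sum_div]
  exact sum_congr rfl fun k _ => by push_cast; ring

lemma tendsto_coinExp_card_nonInjTuplesIn_div (hp01 : ∀ N, p N ∈ Set.Ioo 0 1)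
    (hNp : Tendsto (fun N : ℕ => (N : ℝ) * p N) atTop atTop) :
    Tendsto (fun N : ℕ => coinExp (p N) (fun ω : Fin (N + 1) → Bool => #(nonInjTuplesIn h ω))
      / ((N : ℝ) * p N) ^ h) atTop (𝓝 0) := by
  refine tendsto_zero_of_le_sum (K := range h) (fun k => (k : ℝ) ^ h) _
    (fun N => div_nonneg (coinExp_nonneg (hp01 N).1.le (hp01 N).2.le fun ω => Nat.cast_nonneg _)
      (pow_nonneg (mul_nonneg N.cast_nonneg (hp01 N).1.le) _)) (fun N => ?_)
    fun k hk => tendsto_succ_pow_mul_pow_div_pow (mem_range.1 hk) hNp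
  refine (div_le_div_of_nonneg_right (coinExp_card_nonInjTuplesIn_le (hp01 N).1.le)
    (pow_nonneg (mul_nonneg N.cast_nonneg (hp01 N).1.le) _)).trans_eq ?_
  rw [sum_div]
  exact sum_congr rfl fun k _ => by push_cast; ring

lemma tendsto_coinExp_card_collisions_div (u : Fin h → ℤ) (hu : ∀ i, u i ≠ 0) (hh : 0 < h)
    (hp01 : ∀ N, p N ∈ Set.Ioo 0 1) (hNp : Tendsto (fun N : ℕ => (N : ℝ) * p N) atTop atTop)
    (hsub : Tendsto (fun N : ℕ => p N * (N : ℝ) ^ (((h : ℝ) - 1) / h)) atTop (𝓝 0)) :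
    Tendsto (fun N : ℕ => coinExp (p N) (fun ω : Fin (N + 1) → Bool => #(collisions u ω))
      / ((N : ℝ) * p N) ^ h) atTop (𝓝 0) := by
  refine tendsto_zero_of_le_sum (K := Icc 1 (2 * h)) (fun k => (k : ℝ) ^ (2 * h)) _
    (fun N => div_nonneg (coinExp_nonneg (hp01 N).1.le (hp01 N).2.le fun ω => Nat.cast_nonneg _)
      (pow_nonneg (mul_nonneg N.cast_nonneg (hp01 N).1.le) _)) (fun N => ?_)
    fun k hk => tendsto_succ_pow_mul_pow_div_pow_of_le_two_mul (mem_Icc.1 hk).1 (mem_Icc.1 hk).2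
      hNp (tendsto_mul_pow_pred_of_subcritical hh hsub)
  refine (div_le_div_of_nonneg_right (coinExp_card_collisions_le u hu hh (hp01 N).1.le)
    (pow_nonneg (mul_nonneg N.cast_nonneg (hp01 N).1.le) _)).trans_eq ?_
  rw [sum_div]
  exact sum_congr rfl fun k _ => by push_cast; ring

end NormalizedMoments

end HM

theorem subcritical_size_of_LA_general
    (h : ℕ) (hh : 2 ≤ h) (u : Fin h → ℤ) (hu : ∀ i, u i ≠ 0)
    (p : ℕ → ℝ) (hp01 : ∀ N, p N ∈ Set.Ioo (0 : ℝ) 1)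
    (hNp : Filter.Tendsto (fun N : ℕ => (N : ℝ) * p N) Filter.atTop Filter.atTop)
    (hsub : Filter.Tendsto (fun N : ℕ => p N * (N : ℝ) ^ (((h : ℝ) - 1) / h))
      Filter.atTop (nhds 0)) :
    ∀ ε > (0 : ℝ),
      Filter.Tendsto
        (fun N : ℕ => HM.coin N (p N)
          {ω | ε < |(HM.thetaL h u : ℝ) * ((HM.LA h N u ω).card : ℝ)
            / ((N : ℝ) * p N) ^ h - 1|})
        Filter.atTop (nhds 0) := by
  intro ε hε
  have hmean := HM.tendsto_coinExp_card_injTuplesIn_div (h := h) fun N => (hp01 N).1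
  have hvar := HM.tendsto_coinVar_card_injTuplesIn_div_sq (h := h) hp01 hNp
  have herr : Tendsto (fun N : ℕ => HM.coinExp (p N) (fun ω : Fin (N + 1) → Bool =>
      (HM.thetaL h u : ℝ) * #(HM.nonInjTuplesIn h ω) + #(HM.collisions u ω)) / ((N : ℝ) * p N) ^ h)
      atTop (𝓝 0) := by
    simpa [HM.coinExp_add, HM.coinExp_const_mul, add_div, mul_div_assoc] using
      ((HM.tendsto_coinExp_card_nonInjTuplesIn_div hp01 hNp).const_mul (HM.thetaL h u : ℝ)).add
        (HM.tendsto_coinExp_card_collisions_div u hu (by omega) hp01 hNp hsub)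
  have hbound := (ENNReal.tendsto_ofReal (hvar.const_mul ((4 / ε) ^ 2))).add
    (ENNReal.tendsto_ofReal (herr.const_mul (4 / ε)))
  simp only [mul_zero, ENNReal.ofReal_zero, add_zero] at hbound
  refine tendsto_of_tendsto_of_tendsto_of_le_of_le' tendsto_const_nhds hbound
    (Eventually.of_forall fun N => zero_le) ?_
  filter_upwards [Metric.tendsto_nhds.1 hmean (ε / 2) (half_pos hε), eventually_gt_atTop 0]
    with N hm hN
  exact HM.coin_lt_abs_div_sub_one_le (hp01 N).1.le (hp01 N).2.le hε
    (pow_pos (mul_pos (Nat.cast_pos.2 hN) (hp01 N).1) h)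
    (fun ω => HM.abs_thetaL_mul_card_LA_sub_le) hm.le

theorem subcritical_size_of_LA
    (h : ℕ) (hh : 2 ≤ h) (u : Fin h → ℤ) (hu : ∀ i, u i ≠ 0)
    (hgcd : Finset.univ.gcd u = 1)
    (p : ℕ → ℝ) (hp01 : ∀ N, p N ∈ Set.Ioo (0 : ℝ) 1)
    (hp0 : Filter.Tendsto p Filter.atTop (nhds 0))
    (hNp : Filter.Tendsto (fun N : ℕ => (N : ℝ) * p N) Filter.atTop Filter.atTop)
    (hsub : Filter.Tendsto (fun N : ℕ => p N * (N : ℝ) ^ (((h : ℝ) - 1) / h))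
      Filter.atTop (nhds 0)) :
    ∀ ε > (0 : ℝ),
      Filter.Tendsto
        (fun N : ℕ => HM.coin N (p N)
          {ω | ε < |(HM.thetaL h u : ℝ) * ((HM.LA h N u ω).card : ℝ)
            / ((N : ℝ) * p N) ^ h - 1|})
        Filter.atTop (nhds 0) :=
  subcritical_size_of_LA_general h hh u hu p hp01 hNp hsub
end

section
/- Assume h ≥ 3 and suppose p(N) → 0 and N·p(N)^{h/(h-1)} → ∞ as N → ∞. Then there exists a constant c > 0 such that E[|L(A)^c|] ≥ c·(1/p(N))^{h/(h-1)} for all sufficiently large N. -/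
/-!
If a value of `L(A)` lies within `K` of the top `s_L N` of its range, then every `aᵢ` lies within
`K` of an endpoint of `{0, …, N}`, because `s_L N - L(a)` is a sum of nonnegative terms, one per
coefficient. Hence all but `|S|^h` of the `K` values nearest `s_L N` are missing from `L(A)`, where
`S` is the part of `A` in the two end windows of length `K`: `|L(A)^c| ≥ K - |S|^h`. For `T` with
`2 T^h ≤ K` this gives the bound `|L(A)^c| ≥ (K/2)(1 - |S|/T)`, linear in `|S|`, and `E|S| ≤ 2Kp`.
Taking `T = p^(-1/(h-1)) / 16` and `K = ⌈2 T^h⌉` makes `2Kp/T ≤ 1/2`, so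
`E|L(A)^c| ≥ T^h / 2`, a constant times `p^(-h/(h-1))`; `N p^(h/(h-1)) → ∞` ensures `K ≤ N`.
-/
open MeasureTheory Finset Filter

namespace HM

lemma rpow_div_sub_one_eq_pow {x : ℝ} (hx : 0 ≤ x) (h : ℕ) :
    x ^ ((h : ℝ) / ((h : ℝ) - 1)) = (x ^ ((h : ℝ) - 1)⁻¹) ^ h := by
  rw [← Real.rpow_natCast, ← Real.rpow_mul hx, inv_mul_eq_div]

lemma rpow_inv_sub_one_pow_sub_one {x : ℝ} (hx : 0 ≤ x) {h : ℕ} (hh : 1 < h) :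
    (x ^ ((h : ℝ) - 1)⁻¹) ^ (h - 1) = x := by
  have : (h : ℝ) - 1 ≠ 0 := by
    rw [sub_ne_zero]; exact_mod_cast hh.ne'
  rw [← Real.rpow_natCast, ← Real.rpow_mul hx, Nat.cast_sub hh.le, Nat.cast_one,
    inv_mul_cancel₀ this, Real.rpow_one]

lemma half_mul_one_sub_div_le_of_sub_pow_le {h : ℕ} {x K T s : ℝ} (hx0 : 0 ≤ x)
    (hx : K - s ^ h ≤ x) (hs : 0 ≤ s) (hT : 0 < T) (hTK : 2 * T ^ h ≤ K) :
    K / 2 * (1 - s / T) ≤ x := by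
  have hK : 0 ≤ K := le_trans (by positivity) hTK
  rcases le_or_gt s T with hsT | hsT
  · have : s ^ h ≤ T ^ h := pow_le_pow_left₀ hs hsT h
    have : 0 ≤ s / T := by positivity
    nlinarith
  · have : 1 - s / T < 0 := by rwa [sub_neg, one_lt_div hT]
    exact (mul_nonpos_of_nonneg_of_nonpos (by positivity) this.le).trans hx0

lemma isProbabilityMeasure_bern {p : ℝ} (h0 : 0 ≤ p) (h1 : p ≤ 1) :
    IsProbabilityMeasure (bern p) := by
  constructor
  simp [bern, ← ENNReal.ofReal_add h0 (sub_nonneg.2 h1)]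

lemma integral_indicator_true_bern {p : ℝ} (h0 : 0 ≤ p) :
    ∫ t, (if t = true then (1 : ℝ) else 0) ∂bern p = p := by
  rw [integral_fintype .of_finite]
  simp [bern, Measure.real, h0]

lemma integral_card_filter_coin {N : ℕ} {p : ℝ} (h0 : 0 ≤ p) (h1 : p ≤ 1)
    (B : Finset (Fin (N + 1))) :
    ∫ ω, ({b ∈ B | ω b = true}.card : ℝ) ∂coin N p = B.card * p := by
  have := isProbabilityMeasure_bern h0 h1
  simp only [coin, Finset.card_filter, Nat.cast_sum, Nat.cast_ite, Nat.cast_one, Nat.cast_zero]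
  rw [integral_finsetSum _ fun _ _ => Integrable.of_finite]
  simp [integral_comp_eval (f := fun t : Bool => if t = true then (1 : ℝ) else 0)
    (μ := fun _ => bern p) .of_discrete, integral_indicator_true_bern h0]

variable {h : ℕ} {u : Fin h → ℤ}

lemma mL_eq_sum_abs : mL h u = ∑ i, |u i| := by
  simp only [mL, sL, dL, Finset.sum_filter, ← Finset.sum_add_distrib]
  refine Finset.sum_congr rfl fun i _ => ?_
  rcases lt_trichotomy (u i) 0 with hi | hi | hi
  · simp [hi, hi.not_gt]
  · simp [hi]
  · simp [hi, hi.not_gt, abs_of_pos hi]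

lemma one_le_mL (hh : 0 < h) (hu : ∀ i, u i ≠ 0) : 1 ≤ mL h u := by
  rw [mL_eq_sum_abs]
  calc (1 : ℤ) ≤ |u ⟨0, hh⟩| := Int.one_le_abs (hu _)
    _ ≤ ∑ i, |u i| := Finset.single_le_sum (fun i _ => abs_nonneg (u i)) (Finset.mem_univ _)

lemma sL_mul_sub_sum_mul (N : ℤ) (a : Fin h → ℤ) :
    sL h u * N - ∑ i, u i * a i = ∑ i, ((if 0 < u i then u i * N else 0) - u i * a i) := by
  rw [sL, Finset.sum_mul, Finset.sum_filter, Finset.sum_sub_distrib]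

def boundaryWindow (N K : ℕ) : Finset (Fin (N + 1)) :=
  {b | (b : ℕ) < K ∨ N < (b : ℕ) + K}

lemma card_boundaryWindow_le (N K : ℕ) : (boundaryWindow N K).card ≤ 2 * K := by
  rw [boundaryWindow, Finset.filter_or, two_mul]
  refine (Finset.card_union_le _ _).trans (add_le_add ?_ ?_)
  · simpa using Finset.card_le_card_of_injOn (t := Finset.range K) (fun b : Fin (N + 1) => (b : ℕ))
      (fun b hb => by simpa using hb) (fun b _ b' _ hbb => Fin.ext hbb)
  · simpa using Finset.card_le_card_of_injOn (t := Finset.range K)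
      (fun b : Fin (N + 1) => N - (b : ℕ)) (fun b hb => by simp at hb ⊢; omega)
      (fun b _ b' _ hbb => by
        have := b.isLt
        have := b'.isLt
        exact Fin.ext (by simp only at hbb; omega))

lemma mem_boundaryWindow_of_sL_mul_sub_lt (hu : ∀ i, u i ≠ 0) {N K : ℕ}
    {a : Fin h → Fin (N + 1)} (ha : sL h u * N - K < ∑ i, u i * ((a i : ℕ) : ℤ)) (i : Fin h) :
    a i ∈ boundaryWindow N K := by
  set g : Fin h → ℤ := fun j => (if 0 < u j then u j * N else 0) - u j * ((a j : ℕ) : ℤ)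
  have haN : ∀ j, ((a j : ℕ) : ℤ) ≤ N := fun j => by have := (a j).isLt; omega
  have hg_nonneg : ∀ j, 0 ≤ g j := fun j => by
    by_cases hj : 0 < u j
    · simpa [g, hj, ← mul_sub] using mul_nonneg hj.le (sub_nonneg.2 (haN j))
    · simp only [g, hj, if_false, zero_sub, neg_nonneg]
      exact mul_nonpos_of_nonpos_of_nonneg (not_lt.1 hj) (by positivity)
  have hgi : g i < K := calc
    g i ≤ ∑ j, g j := Finset.single_le_sum (fun j _ => hg_nonneg j) (Finset.mem_univ i)
    _ < K := by simp only [g, ← sL_mul_sub_sum_mul]; linarith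
  simp only [boundaryWindow, Finset.mem_filter, Finset.mem_univ, true_and]
  rcases (hu i).lt_or_gt with hi | hi
  · left
    have : ((a i : ℕ) : ℤ) ≤ g i := by simp only [g, hi.not_gt, if_false]; nlinarith
    omega
  · right
    have : (N : ℤ) - (a i : ℕ) ≤ g i := by simp only [g, hi, if_true]; nlinarith [haN i]
    omega

lemma inter_LA_subset_image_piFinset (hu : ∀ i, u i ≠ 0) {N K : ℕ} (ω : Fin (N + 1) → Bool) :
    Finset.Ioc (sL h u * N - K) (sL h u * N) ∩ LA h N u ω ⊆
      (Fintype.piFinset fun _ : Fin h => {b ∈ boundaryWindow N K | ω b = true}).image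
        fun a => ∑ i, u i * ((a i : ℕ) : ℤ) := by
  intro n hn
  obtain ⟨hnW, hnLA⟩ := Finset.mem_inter.1 hn
  obtain ⟨a, ha, rfl⟩ := Finset.mem_image.1 hnLA
  refine Finset.mem_image.2 ⟨a, Fintype.mem_piFinset.2 fun i => ?_, rfl⟩
  exact Finset.mem_filter.2 ⟨mem_boundaryWindow_of_sL_mul_sub_lt hu (Finset.mem_Ioc.1 hnW).1 i,
    (Finset.mem_filter.1 ha).2 i⟩

lemma le_card_LAc_add_card_pow (hh : 0 < h) (hu : ∀ i, u i ≠ 0) {N K : ℕ} (hK : K ≤ N)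
    (ω : Fin (N + 1) → Bool) :
    K ≤ (LAc h N u ω).card + {b ∈ boundaryWindow N K | ω b = true}.card ^ h := by
  set W := Finset.Ioc (sL h u * N - K) (sL h u * N)
  have hW : W ⊆ Finset.Icc (-(dL h u * N)) (sL h u * N) := by
    have := one_le_mL hh hu
    intro n hn
    simp only [W, Finset.mem_Ioc, Finset.mem_Icc, mL] at hn this ⊢
    constructor <;> nlinarith
  calc K = (W \ LA h N u ω).card + (W ∩ LA h N u ω).card := by
        rw [Finset.card_sdiff_add_card_inter, Int.card_Ioc]; omega
    _ ≤ (LAc h N u ω).card + {b ∈ boundaryWindow N K | ω b = true}.card ^ h := by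
      gcongr
      · exact Finset.sdiff_subset_sdiff hW subset_rfl
      · refine (Finset.card_le_card (inter_LA_subset_image_piFinset hu ω)).trans ?_
        exact Finset.card_image_le.trans (by simp)

lemma half_mul_one_sub_le_integral_card_LAc (hh : 0 < h) (hu : ∀ i, u i ≠ 0) {N K : ℕ}
    (hK : K ≤ N) {p T : ℝ} (h0 : 0 ≤ p) (h1 : p ≤ 1) (hT : 0 < T) (hTK : 2 * T ^ h ≤ K) :
    (K : ℝ) / 2 * (1 - 2 * K * p / T) ≤ ∫ ω, ((LAc h N u ω).card : ℝ) ∂coin N p := by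
  have := isProbabilityMeasure_bern h0 h1
  have : IsProbabilityMeasure (coin N p) := by rw [coin]; infer_instance
  have hD : ((boundaryWindow N K).card : ℝ) ≤ 2 * K := by
    exact_mod_cast card_boundaryWindow_le N K
  calc (K : ℝ) / 2 * (1 - 2 * K * p / T)
      ≤ K / 2 * (1 - (boundaryWindow N K).card * p / T) := by gcongr
    _ = ∫ ω, (K : ℝ) / 2 * (1 - {b ∈ boundaryWindow N K | ω b = true}.card / T) ∂coin N p := by
      rw [integral_const_mul, integral_sub (integrable_const _) .of_finite, integral_div,
        integral_card_filter_coin h0 h1]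
      simp
    _ ≤ ∫ ω, ((LAc h N u ω).card : ℝ) ∂coin N p := by
      refine integral_mono .of_finite .of_finite fun ω => ?_
      refine half_mul_one_sub_div_le_of_sub_pow_le (h := h) (by positivity) ?_ (by positivity)
        hT hTK
      have := le_card_LAc_add_card_pow hh hu hK ω
      rw [sub_le_iff_le_add]
      exact_mod_cast this

lemma pow_div_two_le_integral_card_LAc (hh : 0 < h) (hu : ∀ i, u i ≠ 0) {N : ℕ} {p T : ℝ}
    (h0 : 0 ≤ p) (h1 : p ≤ 1) (hT : 0 < T) (hTN : 2 * T ^ h + 1 ≤ N)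
    (hTh : 16 * T ^ h * p ≤ T) (hpT : 16 * p ≤ T) :
    T ^ h / 2 ≤ ∫ ω, ((LAc h N u ω).card : ℝ) ∂coin N p := by
  set K := ⌈2 * T ^ h⌉₊
  have hK_ge : 2 * T ^ h ≤ K := Nat.le_ceil _
  have hK_lt : (K : ℝ) < 2 * T ^ h + 1 := Nat.ceil_lt_add_one (by positivity)
  have hKN : K ≤ N := by exact_mod_cast (hK_lt.trans_le hTN).le
  have hKp : 2 * K * p / T ≤ 1 / 2 := by
    rw [div_le_iff₀ hT]
    nlinarith
  calc T ^ h / 2 ≤ (K : ℝ) / 2 * (1 - 1 / 2) := by linarith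
    _ ≤ (K : ℝ) / 2 * (1 - 2 * K * p / T) := by gcongr
    _ ≤ _ := half_mul_one_sub_le_integral_card_LAc hh hu hKN h0 h1 hT hK_ge

lemma pow_div_le_integral_card_LAc (hh : 2 ≤ h) (hu : ∀ i, u i ≠ 0) {N : ℕ} {p r : ℝ}
    (h0 : 0 ≤ p) (hp : p ≤ 1 / 256) (hr : 1 ≤ r) (hrp : r ^ (h - 1) * p = 1)
    (hrN : 2 * r ^ h ≤ N) :
    1 / (2 * 16 ^ h) * r ^ h ≤ ∫ ω, ((LAc h N u ω).card : ℝ) ∂coin N p := by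
  have h16 : (16 : ℝ) ^ 2 ≤ 16 ^ h := pow_le_pow_right₀ (by norm_num) hh
  have hr_pow : 1 ≤ r ^ h := one_le_pow₀ hr
  have hrhp : r ^ h * p = r := by
    rw [← pow_sub_one_mul (by omega : h ≠ 0), mul_right_comm, hrp, one_mul]
  have hT : (r / 16) ^ h = r ^ h / 16 ^ h := div_pow r 16 h
  calc 1 / (2 * 16 ^ h) * r ^ h = (r / 16) ^ h / 2 := by rw [hT]; field_simp
    _ ≤ _ := by
      refine pow_div_two_le_integral_card_LAc (by omega) hu h0 (by linarith) (by positivity)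
        ?_ ?_ (by linarith) <;> rw [hT]
      · have : r ^ h / 16 ^ h ≤ r ^ h / 16 ^ 2 := by gcongr
        linarith
      · have : r / 16 ^ h ≤ r / 16 ^ 2 := by gcongr
        rw [mul_assoc, div_mul_eq_mul_div, hrhp]
        linarith

end HM

theorem supercritical_expected_missing_lower_bound_general
    (h : ℕ) (hh : 3 ≤ h) (u : Fin h → ℤ) (hu : ∀ i, u i ≠ 0)
    (p : ℕ → ℝ) (hp01 : ∀ N, p N ∈ Set.Ioo (0 : ℝ) 1)
    (hp0 : Filter.Tendsto p Filter.atTop (nhds 0))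
    (hsup : Filter.Tendsto (fun N : ℕ => (N : ℝ) * p N ^ ((h : ℝ) / ((h : ℝ) - 1)))
      Filter.atTop Filter.atTop) :
    ∃ c : ℝ, 0 < c ∧ ∀ᶠ N : ℕ in Filter.atTop,
      c * (1 / p N) ^ ((h : ℝ) / ((h : ℝ) - 1)) ≤
        ∫ ω, ((HM.LAc h N u ω).card : ℝ) ∂HM.coin N (p N) := by
  refine ⟨1 / (2 * 16 ^ h), by positivity, ?_⟩
  filter_upwards [hp0.eventually (ge_mem_nhds (by norm_num : (0 : ℝ) < 1 / 256)),
    hsup.eventually_ge_atTop 2] with N hpN hNq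
  obtain ⟨hp, hp1⟩ := hp01 N
  have hq := HM.rpow_div_sub_one_eq_pow (one_div_pos.2 hp).le h
  rw [hq]
  refine HM.pow_div_le_integral_card_LAc (by omega) hu hp.le hpN ?_ ?_ ?_
  · refine Real.one_le_rpow (one_le_one_div hp hp1.le) ?_
    rw [inv_nonneg, sub_nonneg]
    exact_mod_cast (by omega : 1 ≤ h)
  · rw [HM.rpow_inv_sub_one_pow_sub_one (one_div_pos.2 hp).le (by omega), one_div_mul_cancel hp.ne']
  · rw [← hq, one_div, Real.inv_rpow hp.le, ← div_eq_mul_inv]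
    rwa [div_le_iff₀ (by positivity)]

theorem supercritical_expected_missing_lower_bound
    (h : ℕ) (hh : 3 ≤ h) (u : Fin h → ℤ) (hu : ∀ i, u i ≠ 0)
    (hgcd : Finset.univ.gcd u = 1)
    (p : ℕ → ℝ) (hp01 : ∀ N, p N ∈ Set.Ioo (0 : ℝ) 1)
    (hp0 : Filter.Tendsto p Filter.atTop (nhds 0))
    (hNp : Filter.Tendsto (fun N : ℕ => (N : ℝ) * p N) Filter.atTop Filter.atTop)
    (hsup : Filter.Tendsto (fun N : ℕ => (N : ℝ) * p N ^ ((h : ℝ) / ((h : ℝ) - 1)))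
      Filter.atTop Filter.atTop) :
    ∃ c : ℝ, 0 < c ∧ ∀ᶠ N : ℕ in Filter.atTop,
      c * (1 / p N) ^ ((h : ℝ) / ((h : ℝ) - 1)) ≤
        ∫ ω, ((HM.LAc h N u ω).card : ℝ) ∂HM.coin N (p N) :=
  supercritical_expected_missing_lower_bound_general h hh u hu p hp01 hp0 hsup
end
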